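/- arXiv:2601.08208 — 4 statements merged into one kernel-verified Lean document; each statement's English description precedes it below -/
import Mathlib

section
/- (Pliss lemma, multiplicative finite version.) Given 0 < γ₀ < γ₁ and a > 1, there exist n₀ ≥ 1 and l > 0 such that for every finite sequence a_0, ..., a_n of reals with n > n₀, a⁻¹ < a_i < a for all i, and ∏_{i=0}^{n} a_i < γ₀^{n}, there exist indices 1 ≤ n_1 < n_2 < ... < n_r ≤ n with r > l·n such that for every j and every k with n_j < k ≤ n, one has ∏_{i=n_j+1}^{k} a_i < γ₁^{k - n_j}. -/
/-! Pass to logarithms: with `S k = ∑_{i ≤ k} (log a_i - log γ₁)`, a time `m` from which all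
forward products contract at rate `γ₁` is a Pliss time, i.e. `S k < S m` for all `m < k ≤ n`.
Each step of `S` is above `-B`, `B = log a + |log γ₁|`. By descending induction,
`S m ≤ S n + B · #{Pliss times in [m, n]}`: at a Pliss time use the step bound, elsewhere `S m` is
dominated by a later value. With `δ = log γ₁ - log γ₀` we get `S 1 - S n > n δ - 3B ≥ n δ / 2`
once `n ≥ 6B / δ`, hence more than `(δ / 2B) n` Pliss times. -/

open Finset

open Classical in
noncomputable def plissTimes (S : ℕ → ℝ) (m n : ℕ) : Finset ℕ :=
  {j ∈ Icc m n | ∀ k ∈ Ioc j n, S k < S j}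

section PlissTimes

variable {S : ℕ → ℝ} {m m' n : ℕ}

theorem plissTimes_subset_Icc : plissTimes S m n ⊆ Icc m n := filter_subset _ _

theorem plissTimes_anti (h : m ≤ m') : plissTimes S m' n ⊆ plissTimes S m n := by
  intro j hj
  simp only [plissTimes, mem_filter, mem_Icc] at hj ⊢
  exact ⟨⟨h.trans hj.1.1, hj.1.2⟩, hj.2⟩

theorem plissTimes_eq_insert (hmn : m ≤ n) (hm : ∀ k ∈ Ioc m n, S k < S m) :
    plissTimes S m n = insert m (plissTimes S (m + 1) n) := by
  ext j
  simp only [plissTimes, mem_insert, mem_filter, mem_Icc]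
  constructor
  · rintro ⟨⟨hmj, hjn⟩, hj⟩
    rcases hmj.eq_or_lt with rfl | hlt
    · exact Or.inl rfl
    · exact Or.inr ⟨⟨hlt, hjn⟩, hj⟩
  · rintro (rfl | ⟨⟨hmj, hjn⟩, hj⟩)
    · exact ⟨⟨le_rfl, hmn⟩, hm⟩
    · exact ⟨⟨by omega, hjn⟩, hj⟩

theorem le_add_mul_card_plissTimes {B : ℝ} (hB : 0 ≤ B) (hS : ∀ i < n, S i ≤ S (i + 1) + B)
    (hmn : m ≤ n) : S m ≤ S n + B * #(plissTimes S m n) := by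
  induction hd : n - m using Nat.strong_induction_on generalizing m with
  | _ d ih =>
  rcases hmn.eq_or_lt with rfl | hlt
  · have : 0 ≤ B * #(plissTimes S m m) := by positivity
    linarith
  by_cases hm : ∀ k ∈ Ioc m n, S k < S m
  · have hnext := ih (n - (m + 1)) (by omega) hlt rfl
    have hm_notMem : m ∉ plissTimes S (m + 1) n := fun h ↦ by
      have := (mem_Icc.1 (plissTimes_subset_Icc h)).1
      omega
    rw [plissTimes_eq_insert hmn hm, card_insert_of_notMem hm_notMem]
    push_cast
    linarith [hS m hlt]
  · push Not at hm
    obtain ⟨k, hk, hSk⟩ := hm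
    obtain ⟨hmk, hkn⟩ := mem_Ioc.1 hk
    have hlater := ih (n - k) (by omega) hkn rfl
    have hcard : (#(plissTimes S k n) : ℝ) ≤ #(plissTimes S m n) := by
      exact_mod_cast card_le_card (plissTimes_anti hmk.le)
    nlinarith

theorem exists_strictMono_plissTimes {B : ℝ} (hB : 0 ≤ B) (hS : ∀ i < n, S i ≤ S (i + 1) + B)
    (hn : 1 ≤ n) :
    ∃ (r : ℕ) (ns : Fin r → ℕ), S 1 - S n ≤ B * r ∧ StrictMono ns ∧
      (∀ j, 1 ≤ ns j ∧ ns j ≤ n) ∧ ∀ j, ∀ k ∈ Ioc (ns j) n, S k < S (ns j) := by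
  set P := plissTimes S 1 n
  have hmem (j) : P.orderEmbOfFin rfl j ∈ P := P.orderEmbOfFin_mem rfl j
  refine ⟨#P, P.orderEmbOfFin rfl, ?_, (P.orderEmbOfFin rfl).strictMono,
    fun j ↦ mem_Icc.1 (plissTimes_subset_Icc (hmem j)), fun j ↦ (mem_filter.1 (hmem j)).2⟩
  linarith [le_add_mul_card_plissTimes hB hS hn]

end PlissTimes

theorem prod_Icc_lt_pow_of_sum_range_lt {x : ℕ → ℝ} {γ : ℝ} (hγ : 0 < γ) {j k : ℕ} (hjk : j ≤ k)
    (hx : ∀ i ∈ Icc (j + 1) k, 0 < x i)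
    (h : ∑ i ∈ range (k + 1), (Real.log (x i) - Real.log γ) <
      ∑ i ∈ range (j + 1), (Real.log (x i) - Real.log γ)) :
    ∏ i ∈ Icc (j + 1) k, x i < γ ^ (k - j) := by
  rw [← sum_range_add_sum_Ico _ (by omega : j + 1 ≤ k + 1), Ico_add_one_right_eq_Icc,
    add_lt_iff_neg_left, sum_sub_distrib, sum_const, Nat.card_Icc, nsmul_eq_mul,
    ← Real.log_prod fun i hi ↦ (hx i hi).ne', sub_neg, Nat.add_sub_add_right,
    ← Real.log_pow] at h
  exact (Real.log_lt_log_iff (prod_pos hx) (by positivity)).1 h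

theorem sum_range_log_sub_log_lt_of_prod_lt {x : ℕ → ℝ} {n : ℕ} (hx : ∀ i ≤ n, 0 < x i)
    {c : ℝ} (h : ∏ i ∈ range (n + 1), x i < c) (γ : ℝ) :
    ∑ i ∈ range (n + 1), (Real.log (x i) - Real.log γ) < Real.log c - (n + 1) * Real.log γ := by
  have hx' : ∀ i ∈ range (n + 1), 0 < x i := fun i hi ↦ hx i (Nat.lt_succ_iff.1 (mem_range.1 hi))
  have := Real.log_lt_log (prod_pos hx') h
  rw [Real.log_prod fun i hi ↦ (hx' i hi).ne'] at this
  simp only [sum_sub_distrib, sum_const, card_range, nsmul_eq_mul]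
  push_cast
  linarith

theorem neg_add_abs_log_lt_log_sub_log {x a : ℝ} (ha : 0 < a) (hx : a⁻¹ < x) (γ : ℝ) :
    -(Real.log a + |Real.log γ|) < Real.log x - Real.log γ := by
  have := Real.log_lt_log (inv_pos.2 ha) hx
  rw [Real.log_inv] at this
  linarith [le_abs_self (Real.log γ)]

/-- Pliss lemma, multiplicative finite version: given `0 < γ₀ < γ₁` and `a > 1`,
there are `n₀ ≥ 1` and a density `l > 0` such that any finite sequence
`a_0, …, a_n` (with `n > n₀`) pinched between `a⁻¹` and `a` whose total product is
`< γ₀ ^ n` admits more than `l·n` Pliss times `1 ≤ n_1 < … < n_r ≤ n`, from each of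
which all forward partial products contract at rate `γ₁`. -/
theorem stmt7 (γ₀ γ₁ a : ℝ) (hγ₀ : 0 < γ₀) (hγ : γ₀ < γ₁) (ha : 1 < a) :
    ∃ n₀ : ℕ, 1 ≤ n₀ ∧ ∃ l : ℝ, 0 < l ∧
      ∀ (n : ℕ) (aseq : ℕ → ℝ), n₀ < n →
        (∀ i ≤ n, a⁻¹ < aseq i ∧ aseq i < a) →
        (∏ i ∈ Finset.range (n + 1), aseq i) < γ₀ ^ n →
        ∃ (r : ℕ) (ns : Fin r → ℕ),
          (l * n < (r : ℝ)) ∧ StrictMono ns ∧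
          (∀ j, 1 ≤ ns j ∧ ns j ≤ n) ∧
          ∀ j, ∀ k, ns j < k → k ≤ n →
            (∏ i ∈ Finset.Icc (ns j + 1) k, aseq i) < γ₁ ^ (k - ns j) := by
  set B := Real.log a + |Real.log γ₁|
  set δ := Real.log γ₁ - Real.log γ₀
  have hB : 0 < B := add_pos_of_pos_of_nonneg (Real.log_pos ha) (abs_nonneg _)
  have hB_ge : -Real.log γ₁ ≤ B := by linarith [neg_abs_le (Real.log γ₁), Real.log_pos ha]
  have hδ : 0 < δ := sub_pos.2 (Real.log_lt_log hγ₀ hγ)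
  refine ⟨⌈6 * B / δ⌉₊ + 1, by omega, δ / (2 * B), by positivity,
    fun n x hn hx hprod ↦ ?_⟩
  have hxpos : ∀ i ≤ n, 0 < x i := fun i hi ↦ (inv_pos.2 (by linarith)).trans (hx i hi).1
  have hlog_gt : ∀ i ≤ n, -B < Real.log (x i) - Real.log γ₁ := fun i hi ↦
    neg_add_abs_log_lt_log_sub_log (by linarith) (hx i hi).1 γ₁
  set S : ℕ → ℝ := fun k ↦ ∑ i ∈ range (k + 1), (Real.log (x i) - Real.log γ₁)
  have hS1 : -(2 * B) < S 1 := by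
    simp only [S, sum_range_succ, sum_range_zero]
    linarith [hlog_gt 0 (by omega), hlog_gt 1 (by omega)]
  have hSn : S n < n * Real.log γ₀ - (n + 1) * Real.log γ₁ := by
    have := sum_range_log_sub_log_lt_of_prod_lt hxpos hprod γ₁
    rwa [Real.log_pow] at this
  have hn_large : 6 * B ≤ n * δ := by
    have hceil : ⌈6 * B / δ⌉₊ ≤ n := by omega
    exact (div_le_iff₀ hδ).1 ((Nat.le_ceil _).trans (by exact_mod_cast hceil))
  obtain ⟨r, ns, hr, hmono, hrange, hpliss⟩ := exists_strictMono_plissTimes (S := S) hB.le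
    (fun i hi ↦ by simp only [S, sum_range_succ _ (i + 1)]; linarith [hlog_gt (i + 1) hi])
    (by omega)
  refine ⟨r, ns, ?_, hmono, hrange, fun j k hjk hkn ↦ ?_⟩
  · rw [div_mul_eq_mul_div, div_lt_iff₀ (by positivity)]
    linarith
  · exact prod_Icc_lt_pow_of_sum_range_lt (hγ₀.trans hγ) hjk.le
      (fun i hi ↦ hxpos i ((mem_Icc.1 hi).2.trans hkn)) (hpliss j k (mem_Ioc.2 ⟨hjk, hkn⟩))
end

section
/- Let (A_i)_{i ∈ ℤ} be a sequence of matrices in GL(2,ℝ), and for a unit vector v define g^n(v) = |det B_n| / ‖B_n v‖² where B_n = A_{n-1}···A_0 for n > 0 (and suitably for n ≤ 0). If there exist two unit vectors u ≠ ±v at some point with g^n(v) ≥ 1 for all n ≥ 0 and g^n(u) ≥ 1 for all n ≥ 0, and additionally g^n(w) ≥ 1 for all n ≥ 0 for every w in the arc between u and v, then for every n, ‖B_n w‖² ≤ |det B_n| for all such w; in particular the norms ‖B_n w‖ are uniformly comparable (ratio bounded by a constant depending on the angle between u and v) — i.e., B_n restricted to the span behaves conformally up to bounded distortion. -/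
/-!
Write `ω` for the area form of the plane. Since `ω (B u) (B v) = det B · ω u v`, the bound
`|ω x y| ≤ ‖x‖ ‖y‖` gives `|det B| · |ω u v| ≤ ‖B u‖ ‖B v‖`. Combined with criticality of the
endpoint `u`, i.e. `‖B u‖² ≤ |det B|`, this yields `|ω u v| · ‖B u‖ ≤ ‖B v‖`, and symmetrically.
For unit vectors, `u ≠ ±v` is exactly `ω u v ≠ 0`, so `C = |ω u v|⁻¹` works for every `n`.
-/

open Module

namespace Orientation

variable {E : Type*} [NormedAddCommGroup E] [InnerProductSpace ℝ E] [Fact (finrank ℝ E = 2)]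
  (o : Orientation ℝ E (Fin 2))

theorem areaForm_linearMap_apply (f : E →ₗ[ℝ] E) (x y : E) :
    o.areaForm (f x) (f y) = LinearMap.det f * o.areaForm x y := by
  have hb := o.finOrthonormalBasis_orientation two_pos Fact.out
  rw [o.areaForm_to_volumeForm, o.areaForm_to_volumeForm, o.volumeForm_robust _ hb,
    ← Basis.det_comp]
  congr 1
  ext i
  fin_cases i <;> rfl

theorem abs_det_mul_abs_areaForm_le (f : E →ₗ[ℝ] E) (x y : E) :
    |LinearMap.det f| * |o.areaForm x y| ≤ ‖f x‖ * ‖f y‖ := by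
  rw [← abs_mul, ← o.areaForm_linearMap_apply]
  exact o.abs_areaForm_le _ _

theorem areaForm_ne_zero_of_norm_eq_one {u v : E} (hu : ‖u‖ = 1) (hv : ‖v‖ = 1)
    (huv : u ≠ v) (huv' : u ≠ -v) : o.areaForm u v ≠ 0 := by
  intro h
  have hinner : inner ℝ u v ^ 2 = 1 := by simpa [h, hu, hv] using o.inner_sq_add_areaForm_sq u v
  rcases sq_eq_one_iff.mp hinner with h1 | h1
  · exact huv ((inner_eq_one_iff_of_norm_eq_one hu hv).mp h1)
  · exact huv' ((inner_eq_neg_one_iff_of_norm_eq_one hu hv).mp h1)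

theorem abs_areaForm_mul_norm_le (f : E →ₗ[ℝ] E) {x : E} (hx : ‖f x‖ ^ 2 ≤ |LinearMap.det f|)
    (y : E) : |o.areaForm x y| * ‖f x‖ ≤ ‖f y‖ := by
  rcases (norm_nonneg (f x)).eq_or_lt with h0 | hpos
  · rw [← h0, mul_zero]
    exact norm_nonneg _
  refine le_of_mul_le_mul_left ?_ hpos
  calc ‖f x‖ * (|o.areaForm x y| * ‖f x‖) = |o.areaForm x y| * ‖f x‖ ^ 2 := by ring
    _ ≤ |o.areaForm x y| * |LinearMap.det f| := by gcongr
    _ ≤ ‖f x‖ * ‖f y‖ := by linarith [o.abs_det_mul_abs_areaForm_le f x y]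

end Orientation

theorem le_of_one_le_div_of_nonneg {a b : ℝ} (ha : 0 ≤ a) (hb : 0 ≤ b) (h : 1 ≤ b / a) :
    a ≤ b := by
  rcases ha.eq_or_lt with rfl | ha
  · exact hb
  · exact (one_le_div ha).mp h

theorem stmt10_general
    (B : ℕ → (EuclideanSpace ℝ (Fin 2) →ₗ[ℝ] EuclideanSpace ℝ (Fin 2)))
    (u v : EuclideanSpace ℝ (Fin 2)) (hu : ‖u‖ = 1) (hv : ‖v‖ = 1)
    (huv : u ≠ v) (huv' : u ≠ -v)
    (hcrit : ∀ n : ℕ, ∀ t ∈ Set.Icc (0 : ℝ) 1,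
      1 ≤ |LinearMap.det (B n)| /
        ‖B n (‖(1 - t) • u + t • v‖⁻¹ • ((1 - t) • u + t • v))‖ ^ 2) :
    (∀ n : ℕ, ∀ t ∈ Set.Icc (0 : ℝ) 1,
      ‖B n (‖(1 - t) • u + t • v‖⁻¹ • ((1 - t) • u + t • v))‖ ^ 2 ≤
        |LinearMap.det (B n)|) ∧
    ∃ C : ℝ, 0 < C ∧ ∀ n : ℕ,
      ‖B n u‖ ≤ C * ‖B n v‖ ∧ ‖B n v‖ ≤ C * ‖B n u‖ := by
  have hsq : ∀ n : ℕ, ∀ t ∈ Set.Icc (0 : ℝ) 1,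
      ‖B n (‖(1 - t) • u + t • v‖⁻¹ • ((1 - t) • u + t • v))‖ ^ 2 ≤
        |LinearMap.det (B n)| := fun n t ht =>
    le_of_one_le_div_of_nonneg (by positivity) (abs_nonneg _) (hcrit n t ht)
  refine ⟨hsq, ?_⟩
  have hBu (n : ℕ) : ‖B n u‖ ^ 2 ≤ |LinearMap.det (B n)| := by simpa [hu] using hsq n 0 (by simp)
  have hBv (n : ℕ) : ‖B n v‖ ^ 2 ≤ |LinearMap.det (B n)| := by simpa [hv] using hsq n 1 (by simp)
  open EuclideanSpace in
  let o : Orientation ℝ (EuclideanSpace ℝ (Fin 2)) (Fin 2) :=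
    (EuclideanSpace.basisFun (Fin 2) ℝ).toBasis.orientation
  have hω : 0 < |o.areaForm u v| := abs_pos.mpr (o.areaForm_ne_zero_of_norm_eq_one hu hv huv huv')
  refine ⟨|o.areaForm u v|⁻¹, inv_pos.mpr hω, fun n => ⟨?_, ?_⟩⟩
  · rw [le_inv_mul_iff₀ hω]
    exact o.abs_areaForm_mul_norm_le (B n) (hBu n) v
  · rw [le_inv_mul_iff₀ hω, o.areaForm_swap, abs_neg]
    exact o.abs_areaForm_mul_norm_le (B n) (hBv n) u

/-- If two distinct unit directions `u ≠ ± v`, and every unit vector on the arc between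
them, are critical for the cocycle `B n = A_{n-1} ⋯ A_0` (i.e. `g^n(w) ≥ 1`, that is
`‖B n w‖² ≤ |det B n|`, for all `n ≥ 0`), then the norms `‖B n u‖` and `‖B n v‖` are
uniformly comparable: the cocycle behaves conformally up to bounded distortion on the
span of `u` and `v`. -/
theorem stmt10
    (A : ℕ → (EuclideanSpace ℝ (Fin 2) ≃ₗ[ℝ] EuclideanSpace ℝ (Fin 2)))
    (B : ℕ → (EuclideanSpace ℝ (Fin 2) →ₗ[ℝ] EuclideanSpace ℝ (Fin 2)))
    (hB0 : B 0 = LinearMap.id)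
    (hBs : ∀ n, B (n + 1) =
      ((A n : EuclideanSpace ℝ (Fin 2) →ₗ[ℝ] EuclideanSpace ℝ (Fin 2))).comp (B n))
    (u v : EuclideanSpace ℝ (Fin 2)) (hu : ‖u‖ = 1) (hv : ‖v‖ = 1)
    (huv : u ≠ v) (huv' : u ≠ -v)
    (hcrit : ∀ n : ℕ, ∀ t ∈ Set.Icc (0 : ℝ) 1,
      1 ≤ |LinearMap.det (B n)| /
        ‖B n (‖(1 - t) • u + t • v‖⁻¹ • ((1 - t) • u + t • v))‖ ^ 2) :
    (∀ n : ℕ, ∀ t ∈ Set.Icc (0 : ℝ) 1,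
      ‖B n (‖(1 - t) • u + t • v‖⁻¹ • ((1 - t) • u + t • v))‖ ^ 2 ≤
        |LinearMap.det (B n)|) ∧
    ∃ C : ℝ, 0 < C ∧ ∀ n : ℕ,
      ‖B n u‖ ≤ C * ‖B n v‖ ∧ ‖B n v‖ ≤ C * ‖B n u‖ :=
  stmt10_general B u v hu hv huv huv' hcrit
end

section
/- Let A ∈ GL(2,ℝ) with |det A| < 1 (dissipative) and suppose there exists a unit vector v and a unit vector direction such that |det A^k| / ‖A^k v‖² = 1 for all k ∈ ℤ (v is a critical direction of the periodic orbit given by A). Then all eigenvalues of A have the same modulus, and this common modulus is strictly less than 1; in particular, the periodic point is attracting. -/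
/-!
If `v` is critical, `‖A^k v‖² = |det A|^k` for every `k ∈ ℤ`. Let `w` be an eigenvector with
eigenvalue `μ`. If `w` is parallel to `v`, then `μ² = ‖A v‖² = |det A|` directly. Otherwise the
area spanned by `A^k w` and `A^k v` is `|det A|^k` times a fixed positive constant and is bounded
by `‖A^k w‖ ‖A^k v‖ = |μ|^k ‖w‖ |det A|^(k/2)`; hence `(μ² / |det A|)^k` is bounded away from `0`
for all `k ∈ ℤ`, which forces `μ² = |det A|`.
-/

open Filter Module

theorem eq_one_of_forall_le_mul_zpow {r c C : ℝ} (hr : 0 ≤ r) (hc : 0 < c)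
    (h : ∀ k : ℤ, c ≤ C * r ^ k) : r = 1 := by
  have not_bounded_below : ∀ {s : ℝ}, 0 ≤ s → s < 1 → ¬∀ n : ℕ, c ≤ C * s ^ n :=
    fun hs0 hs1 hle => hc.not_ge <| ge_of_tendsto'
      (by simpa using (tendsto_pow_atTop_nhds_zero_of_lt_one hs0 hs1).const_mul C) hle
  rcases lt_trichotomy r 1 with hlt | heq | hgt
  · exact absurd (fun n : ℕ => by simpa using h n) (not_bounded_below hr hlt)
  · exact heq
  · exact absurd (fun n : ℕ => by simpa using h (-n))
      (not_bounded_below (by positivity) (inv_lt_one_of_one_lt₀ hgt))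

theorem LinearEquiv.det_zpow {K V : Type*} [Field K] [AddCommGroup V] [Module K V]
    (A : V ≃ₗ[K] V) (k : ℤ) :
    LinearMap.det ((A ^ k : V ≃ₗ[K] V) : V →ₗ[K] V) = LinearMap.det (A : V →ₗ[K] V) ^ k := by
  rw [← LinearEquiv.coe_det, map_zpow, Units.val_zpow_eq_zpow_val, LinearEquiv.coe_det]

theorem LinearEquiv.zpow_apply_eq_smul {K V : Type*} [Field K] [AddCommGroup V] [Module K V]
    (A : V ≃ₗ[K] V) {μ : K} {w : V} (hw : A w = μ • w) (k : ℤ) : (A ^ k) w = μ ^ k • w := by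
  rcases eq_or_ne w 0 with rfl | hw0
  · simp
  have hμ : μ ≠ 0 := by
    rintro rfl
    exact hw0 (A.map_eq_zero_iff.mp (by rw [hw, zero_smul]))
  have hsymm : A.symm w = μ⁻¹ • w :=
    A.symm_apply_eq.mpr (by rw [map_smul, hw, smul_smul, inv_mul_cancel₀ hμ, one_smul])
  induction k using Int.induction_on with
  | zero => simp
  | succ n ih =>
    rw [zpow_add_one, LinearEquiv.mul_apply, hw, map_smul, ih, smul_smul, zpow_add_one₀ hμ,
      mul_comm]
  | pred n ih =>
    rw [zpow_sub_one, LinearEquiv.mul_apply, LinearEquiv.coe_inv, hsymm, map_smul, ih,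
      smul_smul, zpow_sub_one₀ hμ, mul_comm]

theorem OrthonormalBasis.abs_det_le_prod_norm {E : Type*} [NormedAddCommGroup E]
    [InnerProductSpace ℝ E] {n : ℕ} [Fact (finrank ℝ E = n)] (b : OrthonormalBasis (Fin n) ℝ E)
    (v : Fin n → E) : |b.toBasis.det v| ≤ ∏ i, ‖v i‖ := by
  rw [← b.toBasis.orientation.volumeForm_robust b rfl]
  exact Orientation.abs_volumeForm_apply_le _ v

section TwoDimensional

variable {E : Type*} [NormedAddCommGroup E] [InnerProductSpace ℝ E] [Fact (finrank ℝ E = 2)]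

attribute [local instance] FiniteDimensional.of_fact_finrank_eq_two

theorem sq_eq_abs_det_of_linearIndependent (A : E ≃ₗ[ℝ] E) {v w : E} {μ : ℝ}
    (hli : LinearIndependent ℝ ![w, v]) (hw : A w = μ • w)
    (hv : ∀ k : ℤ, ‖(A ^ k) v‖ ^ 2 = |LinearMap.det (A : E →ₗ[ℝ] E)| ^ k) :
    μ ^ 2 = |LinearMap.det (A : E →ₗ[ℝ] E)| := by
  set d := |LinearMap.det (A : E →ₗ[ℝ] E)|
  have hd : 0 < d := abs_pos.mpr A.isUnit_det'.ne_zero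
  let b : OrthonormalBasis (Fin 2) ℝ E := (stdOrthonormalBasis ℝ E).reindex (finCongr Fact.out)
  set c := |b.toBasis.det ![w, v]|
  have hspan := hli.span_eq_top_of_card_eq_finrank
    (by simpa using (Fact.out : finrank ℝ E = 2).symm)
  have hc : 0 < c := abs_pos.mpr (b.toBasis.is_basis_iff_det.mp ⟨hli, hspan⟩).ne_zero
  have hbound : ∀ k : ℤ, c ^ 2 ≤ ‖w‖ ^ 2 * (μ ^ 2 / d) ^ k := by
    intro k
    have hdk : 0 < d ^ k := zpow_pos hd k
    have harea : |b.toBasis.det ![(A ^ k) w, (A ^ k) v]| = d ^ k * c := by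
      have hcomp := b.toBasis.det_comp ((A ^ k : E ≃ₗ[ℝ] E) : E →ₗ[ℝ] E) ![w, v]
      rw [LinearEquiv.det_zpow] at hcomp
      rw [show d ^ k * c = |LinearMap.det (A : E →ₗ[ℝ] E) ^ k * b.toBasis.det ![w, v]| by
        rw [abs_mul, abs_zpow], ← hcomp]
      congr 2
      ext i; fin_cases i <;> rfl
    have hhadamard := b.abs_det_le_prod_norm ![(A ^ k) w, (A ^ k) v]
    rw [Fin.prod_univ_two, harea] at hhadamard
    have hsq : d ^ k * (d ^ k * c ^ 2) ≤ d ^ k * (‖w‖ ^ 2 * (μ ^ 2) ^ k) :=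
      calc d ^ k * (d ^ k * c ^ 2) = (d ^ k * c) ^ 2 := by ring
        _ ≤ (‖(A ^ k) w‖ * ‖(A ^ k) v‖) ^ 2 := pow_le_pow_left₀ (by positivity) hhadamard 2
        _ = d ^ k * (‖w‖ ^ 2 * (μ ^ 2) ^ k) := by
          have hμk : (|μ| ^ k) ^ 2 = (μ ^ 2) ^ k := by
            rw [← zpow_natCast, ← zpow_mul, mul_comm, zpow_mul, zpow_natCast, sq_abs]
          rw [mul_pow, hv k, A.zpow_apply_eq_smul hw k, norm_smul, Real.norm_eq_abs, abs_zpow,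
            mul_pow, hμk]
          ring
    rw [div_zpow, ← mul_div_assoc, le_div_iff₀ hdk, mul_comm]
    exact le_of_mul_le_mul_left hsq hdk
  have := eq_one_of_forall_le_mul_zpow (by positivity) (by positivity) hbound
  rwa [div_eq_one_iff_eq hd.ne'] at this

theorem sq_eq_abs_det_of_apply_eq_smul (A : E ≃ₗ[ℝ] E) {v w : E} {μ : ℝ} (hw0 : w ≠ 0)
    (hw : A w = μ • w) (hv : ∀ k : ℤ, ‖(A ^ k) v‖ ^ 2 = |LinearMap.det (A : E →ₗ[ℝ] E)| ^ k) :
    μ ^ 2 = |LinearMap.det (A : E →ₗ[ℝ] E)| := by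
  by_cases hli : LinearIndependent ℝ ![w, v]
  · exact sq_eq_abs_det_of_linearIndependent A hli hw hv
  obtain ⟨a, rfl⟩ : ∃ a : ℝ, a • w = v := by simpa [LinearIndependent.pair_iff' hw0] using hli
  have hv0 : ‖a • w‖ ^ 2 = 1 := by simpa only [zpow_zero, LinearEquiv.coe_one, id_eq] using hv 0
  have hAv : A (a • w) = μ • a • w := by rw [map_smul, hw, smul_comm]
  have hv1 := hv 1
  rwa [zpow_one, zpow_one, hAv, norm_smul, mul_pow, Real.norm_eq_abs, sq_abs, hv0, mul_one]
    at hv1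

end TwoDimensional

/-- A critical periodic point of a dissipative diffeomorphism is attracting: if
`|det A| < 1` and some unit vector `v` satisfies `|det A^k| / ‖A^k v‖² = 1` for all
`k ∈ ℤ`, then every real eigenvalue of `A` has modulus `√|det A|`, which is `< 1`. -/
theorem stmt13 (A : EuclideanSpace ℝ (Fin 2) ≃ₗ[ℝ] EuclideanSpace ℝ (Fin 2))
    (hdiss : |LinearMap.det
      ((A : EuclideanSpace ℝ (Fin 2) →ₗ[ℝ] EuclideanSpace ℝ (Fin 2)))| < 1)
    (hcrit : ∃ v : EuclideanSpace ℝ (Fin 2), ‖v‖ = 1 ∧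
      ∀ k : ℤ,
        |LinearMap.det ((A ^ k : EuclideanSpace ℝ (Fin 2) ≃ₗ[ℝ] EuclideanSpace ℝ (Fin 2)) :
            EuclideanSpace ℝ (Fin 2) →ₗ[ℝ] EuclideanSpace ℝ (Fin 2))| / ‖(A ^ k) v‖ ^ 2 = 1) :
    (∀ (μ : ℝ) (w : EuclideanSpace ℝ (Fin 2)), w ≠ 0 → A w = μ • w →
      |μ| = Real.sqrt |LinearMap.det
        ((A : EuclideanSpace ℝ (Fin 2) →ₗ[ℝ] EuclideanSpace ℝ (Fin 2)))|) ∧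
    Real.sqrt |LinearMap.det
      ((A : EuclideanSpace ℝ (Fin 2) →ₗ[ℝ] EuclideanSpace ℝ (Fin 2)))| < 1 := by
  have : Fact (finrank ℝ (EuclideanSpace ℝ (Fin 2)) = 2) := ⟨finrank_euclideanSpace_fin⟩
  obtain ⟨v, -, hcrit⟩ := hcrit
  have hv : ∀ k : ℤ, ‖(A ^ k) v‖ ^ 2 =
      |LinearMap.det (A : EuclideanSpace ℝ (Fin 2) →ₗ[ℝ] EuclideanSpace ℝ (Fin 2))| ^ k := by
    intro k
    rw [← abs_zpow, ← A.det_zpow]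
    exact ((div_eq_one_iff_eq fun h => by simpa [h] using hcrit k).mp (hcrit k)).symm
  refine ⟨fun μ w hw0 hw => ?_, ?_⟩
  · rw [← sq_eq_abs_det_of_apply_eq_smul A hw0 hw hv, Real.sqrt_sq_eq_abs]
  · simpa using Real.sqrt_lt_sqrt (abs_nonneg _) hdiss
end

section
/- Let Λ be a compact invariant set of a surface diffeomorphism f with a dominated splitting T_Λ M = E ⊕ F into line bundles: there is λ ∈ (0,1) with ‖Df|_E(x)‖ / ‖Df|_F(x)‖ < λ for all x ∈ Λ. Then Crit(f, Λ) = ∅: for every x ∈ Λ and unit v ∈ T_x M, it is not the case that g^n(v) ≥ 1 for all n ∈ ℤ. (Indeed, if v ∉ E then ‖Df^n v‖ / ‖Df^n|_E‖ grows like λ^{-n}, so g^n(v) = |det Df^n|/‖Df^n v‖² ≤ (‖Df^n|_E‖ ‖Df^n|_F‖ / ‖Df^n v‖²) · C → 0 as n → +∞; if v ∈ E a symmetric argument applies backward.) -/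
/-!
Domination is multiplicative along orbits, `‖Df^n E‖ ≤ λ^n ‖Df^n F‖`, and `f⁻¹` is dominated
with the roles of `E` and `F` exchanged. In the basis `(E x, F x)` the determinant satisfies
`|det Df^n| ≤ C ‖Df^n E‖ ‖Df^n F‖`, while `v = a E + b F` is stretched by at least
`(|b| - λ^n |a|) ‖Df^n F‖`. Hence `g^n(v) ≥ 1` forces `(|b| - λ^n |a|)² ≤ C λ^n`, and letting
`n → ∞` gives `b = 0`. The same argument for `f⁻¹` gives `a = 0`, contradicting `‖v‖ = 1`.
-/

open Module Function Set Filter Topology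

theorem Module.Basis.continuous_det {𝕜 E ι : Type*} [NontriviallyNormedField 𝕜] [CompleteSpace 𝕜]
    [NormedAddCommGroup E] [NormedSpace 𝕜 E] [FiniteDimensional 𝕜 E]
    [Fintype ι] [DecidableEq ι] (B : Basis ι 𝕜 E) : Continuous B.det := by
  rw [show ⇑B.det = fun v => (B.toMatrix v).det from funext B.det_apply]
  exact Continuous.matrix_det <| continuous_matrix fun i j =>
    (B.coord i).continuous_of_finiteDimensional.comp (continuous_apply j)

theorem Module.Basis.exists_norm_det_le_prod_norm {𝕜 E ι : Type*} [NontriviallyNormedField 𝕜]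
    [CompleteSpace 𝕜] [NormedAddCommGroup E] [NormedSpace 𝕜 E] [FiniteDimensional 𝕜 E]
    [Fintype ι] [DecidableEq ι] (B : Basis ι 𝕜 E) :
    ∃ C, 0 < C ∧ ∀ L : E →ₗ[𝕜] E, ‖LinearMap.det L‖ ≤ C * ∏ i, ‖L (B i)‖ := by
  obtain ⟨C, hC, hbound⟩ := B.det.exists_bound_of_continuous B.continuous_det
  refine ⟨C, hC, fun L => ?_⟩
  simpa [B.det_comp, B.det_self] using hbound (L ∘ B)

theorem LinearIndependent.exists_smul_add_smul_eq {K V : Type*} [Field K] [AddCommGroup V]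
    [Module K V] (hV : finrank K V = 2) {u w : V} (huw : LinearIndependent K ![u, w]) (v : V) :
    ∃ a b : K, a • u + b • w = v := by
  let B := basisOfLinearIndependentOfCardEqFinrank huw (by simp [hV])
  exact ⟨B.repr v 0, B.repr v 1, by simpa [B, Fin.sum_univ_two] using B.sum_repr v⟩

theorem LinearIndependent.exists_sq_sub_le_of_one_le_abs_det_div {E : Type*}
    [NormedAddCommGroup E] [NormedSpace ℝ E] [FiniteDimensional ℝ E] (hE : finrank ℝ E = 2)
    {u w : E} (huw : LinearIndependent ℝ ![u, w]) :
    ∃ C, ∀ (L : E →ₗ[ℝ] E) {a b c : ℝ}, ‖L u‖ ≤ c * ‖L w‖ → c * |a| ≤ |b| →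
      1 ≤ |LinearMap.det L| / ‖L (a • u + b • w)‖ ^ 2 → (|b| - c * |a|) ^ 2 ≤ C * c := by
  obtain ⟨C, hC, hdet⟩ :=
    (basisOfLinearIndependentOfCardEqFinrank huw (by simp [hE])).exists_norm_det_le_prod_norm
  refine ⟨C, fun L a b c hdom hab hg => ?_⟩
  have hdetL : |LinearMap.det L| ≤ C * (‖L u‖ * ‖L w‖) := by
    simpa [Fin.prod_univ_two] using hdet L
  have hLv : 0 < ‖L (a • u + b • w)‖ := by
    by_contra! h
    norm_num [norm_le_zero_iff.1 h] at hg
  have hLw : 0 < ‖L w‖ := by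
    by_contra! h
    have hLw : L w = 0 := norm_le_zero_iff.1 h
    simp only [hLw, norm_zero, mul_zero, norm_le_zero_iff] at hdom
    simp [hdom, hLw] at hLv
  have hsq : ‖L (a • u + b • w)‖ ^ 2 ≤ |LinearMap.det L| := by
    rwa [le_div_iff₀ (by positivity), one_mul] at hg
  have hlow : (|b| - c * |a|) * ‖L w‖ ≤ ‖L (a • u + b • w)‖ := by
    have htri := norm_sub_norm_le (b • L w) (-(a • L u))
    simp only [norm_neg, norm_smul, Real.norm_eq_abs, sub_neg_eq_add, map_add, map_smul,
      add_comm (b • L w)] at htri ⊢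
    nlinarith [mul_le_mul_of_nonneg_left hdom (abs_nonneg a)]
  have key : (|b| - c * |a|) ^ 2 * ‖L w‖ ^ 2 ≤ C * c * ‖L w‖ ^ 2 :=
    calc (|b| - c * |a|) ^ 2 * ‖L w‖ ^ 2 = ((|b| - c * |a|) * ‖L w‖) ^ 2 := by ring
      _ ≤ ‖L (a • u + b • w)‖ ^ 2 :=
        pow_le_pow_left₀ (mul_nonneg (sub_nonneg.2 hab) hLw.le) hlow 2
      _ ≤ C * (‖L u‖ * ‖L w‖) := hsq.trans hdetL
      _ ≤ C * (c * ‖L w‖ * ‖L w‖) := by gcongr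
      _ = C * c * ‖L w‖ ^ 2 := by ring
  exact le_of_mul_le_mul_right key (by positivity)

section Dynamics

variable {E : Type*} [NormedAddCommGroup E] [NormedSpace ℝ E]

/-- `g^n(v)` in the notation of the paper. -/
noncomputable def critRatio (f : E → E) (n : ℕ) (x v : E) : ℝ :=
  |LinearMap.det (fderiv ℝ (f^[n]) x).toLinearMap| / ‖fderiv ℝ (f^[n]) x v‖ ^ 2

def InvariantUnitField (f : E → E) (Λ : Set E) (W : E → E) : Prop :=
  ∀ x ∈ Λ, ‖W x‖ = 1 ∧ ∃ α : ℝ, fderiv ℝ f x (W x) = α • W (f x)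

theorem fderiv_comp_apply_of_eq_smul {f g : E → E} {x u w : E} {α : ℝ}
    (hf : DifferentiableAt ℝ f x) (hg : DifferentiableAt ℝ g (f x))
    (h : fderiv ℝ f x u = α • w) : fderiv ℝ (g ∘ f) x u = α • fderiv ℝ g (f x) w := by
  rw [fderiv_comp x hg hf, ContinuousLinearMap.comp_apply, h, map_smul]

theorem fderiv_apply_fderiv_of_leftInverse {f g : E → E} {x : E}
    (hf : DifferentiableAt ℝ f x) (hg : DifferentiableAt ℝ g (f x)) (hgf : LeftInverse g f)
    (u : E) : fderiv ℝ g (f x) (fderiv ℝ f x u) = u := by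
  have h := fderiv_comp x hg hf
  rw [hgf.comp_eq_id, fderiv_id] at h
  exact (DFunLike.congr_fun h u).symm

theorem fderiv_leftInverse_apply_eq_inv_smul {f g : E → E} {x u w : E} {α : ℝ}
    (hf : DifferentiableAt ℝ f x) (hg : DifferentiableAt ℝ g (f x)) (hgf : LeftInverse g f)
    (hu : u ≠ 0) (h : fderiv ℝ f x u = α • w) : α ≠ 0 ∧ fderiv ℝ g (f x) w = α⁻¹ • u := by
  have hinv := fderiv_apply_fderiv_of_leftInverse hf hg hgf u
  rw [h, map_smul] at hinv
  have hα : α ≠ 0 := by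
    rintro rfl
    exact hu (by simpa using hinv.symm)
  exact ⟨hα, by rw [← hinv, smul_smul, inv_mul_cancel₀ hα, one_smul]⟩

namespace InvariantUnitField

variable {f g : E → E} {Λ : Set E} {W : E → E}

theorem id (hW : ∀ x ∈ Λ, ‖W x‖ = 1) : InvariantUnitField id Λ W :=
  fun x hx => ⟨hW x hx, 1, by simp⟩

theorem norm_fderiv_comp (hf : InvariantUnitField f Λ W) (hΛ : MapsTo f Λ Λ)
    (hfd : Differentiable ℝ f) (hgd : Differentiable ℝ g) {x : E} (hx : x ∈ Λ) :
    ‖fderiv ℝ (g ∘ f) x (W x)‖ = ‖fderiv ℝ f x (W x)‖ * ‖fderiv ℝ g (f x) (W (f x))‖ := by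
  obtain ⟨-, α, hα⟩ := hf x hx
  rw [fderiv_comp_apply_of_eq_smul (hfd x) (hgd _) hα, hα, norm_smul, norm_smul,
    (hf _ (hΛ hx)).1, mul_one]

theorem comp (hg : InvariantUnitField g Λ W) (hf : InvariantUnitField f Λ W)
    (hΛ : MapsTo f Λ Λ) (hfd : Differentiable ℝ f) (hgd : Differentiable ℝ g) :
    InvariantUnitField (g ∘ f) Λ W := by
  intro x hx
  obtain ⟨hWx, α, hα⟩ := hf x hx
  obtain ⟨-, β, hβ⟩ := hg (f x) (hΛ hx)
  refine ⟨hWx, α * β, ?_⟩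
  rw [fderiv_comp_apply_of_eq_smul (hfd x) (hgd _) hα, hβ, smul_smul, comp_apply]

theorem exists_fderiv_leftInverse (hf : InvariantUnitField f Λ W) (hgf : LeftInverse g f)
    (hfd : Differentiable ℝ f) (hgd : Differentiable ℝ g) {x : E} (hx : x ∈ Λ) :
    ∃ α : ℝ, α ≠ 0 ∧ fderiv ℝ f x (W x) = α • W (f x) ∧ fderiv ℝ g (f x) (W (f x)) = α⁻¹ • W x := by
  obtain ⟨hWx, α, hα⟩ := hf x hx
  have hW0 : W x ≠ 0 := norm_ne_zero_iff.1 (by rw [hWx]; exact one_ne_zero)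
  obtain ⟨hα0, hαinv⟩ := fderiv_leftInverse_apply_eq_inv_smul (hfd x) (hgd _) hgf hW0 hα
  exact ⟨α, hα0, hα, hαinv⟩

theorem leftInverse (hf : InvariantUnitField f Λ W) (hΛ : SurjOn f Λ Λ) (hgf : LeftInverse g f)
    (hfd : Differentiable ℝ f) (hgd : Differentiable ℝ g) : InvariantUnitField g Λ W := by
  intro y hy
  obtain ⟨x, hx, rfl⟩ := hΛ hy
  obtain ⟨α, -, -, hαinv⟩ := hf.exists_fderiv_leftInverse hgf hfd hgd hx
  exact ⟨(hf _ hy).1, α⁻¹, by rw [hαinv, hgf x]⟩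

theorem norm_fderiv_leftInverse (hf : InvariantUnitField f Λ W) (hΛ : MapsTo f Λ Λ)
    (hgf : LeftInverse g f) (hfd : Differentiable ℝ f) (hgd : Differentiable ℝ g) {x : E}
    (hx : x ∈ Λ) :
    0 < ‖fderiv ℝ f x (W x)‖ ∧ ‖fderiv ℝ g (f x) (W (f x))‖ = ‖fderiv ℝ f x (W x)‖⁻¹ := by
  obtain ⟨α, hα0, hα, hαinv⟩ := hf.exists_fderiv_leftInverse hgf hfd hgd hx
  rw [hα, hαinv, norm_smul, norm_smul, norm_inv, (hf x hx).1, (hf _ (hΛ hx)).1, mul_one, mul_one]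
  exact ⟨norm_pos_iff.2 hα0, rfl⟩

end InvariantUnitField

structure DominatedSplitting (f : E → E) (Λ : Set E) (Es Fs : E → E) (lam : ℝ) : Prop where
  mapsTo : MapsTo f Λ Λ
  linearIndependent : ∀ x ∈ Λ, LinearIndependent ℝ ![Es x, Fs x]
  invariant_fst : InvariantUnitField f Λ Es
  invariant_snd : InvariantUnitField f Λ Fs
  dominated : ∀ x ∈ Λ, ‖fderiv ℝ f x (Es x)‖ ≤ lam * ‖fderiv ℝ f x (Fs x)‖

namespace DominatedSplitting

variable {f g : E → E} {Λ : Set E} {Es Fs : E → E} {lam μ : ℝ}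

theorem id (h : DominatedSplitting f Λ Es Fs lam) : DominatedSplitting id Λ Es Fs 1 where
  mapsTo := mapsTo_id Λ
  linearIndependent := h.linearIndependent
  invariant_fst := .id fun x hx => (h.invariant_fst x hx).1
  invariant_snd := .id fun x hx => (h.invariant_snd x hx).1
  dominated x hx := by simp [(h.invariant_fst x hx).1, (h.invariant_snd x hx).1]

theorem comp (hg : DominatedSplitting g Λ Es Fs μ) (hf : DominatedSplitting f Λ Es Fs lam)
    (hfd : Differentiable ℝ f) (hgd : Differentiable ℝ g) :
    DominatedSplitting (g ∘ f) Λ Es Fs (μ * lam) where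
  mapsTo := hg.mapsTo.comp hf.mapsTo
  linearIndependent := hf.linearIndependent
  invariant_fst := hg.invariant_fst.comp hf.invariant_fst hf.mapsTo hfd hgd
  invariant_snd := hg.invariant_snd.comp hf.invariant_snd hf.mapsTo hfd hgd
  dominated x hx := by
    rw [hf.invariant_fst.norm_fderiv_comp hf.mapsTo hfd hgd hx,
      hf.invariant_snd.norm_fderiv_comp hf.mapsTo hfd hgd hx]
    calc _ ≤ (lam * ‖fderiv ℝ f x (Fs x)‖) * (μ * ‖fderiv ℝ g (f x) (Fs (f x))‖) :=
          mul_le_mul (hf.dominated x hx) (hg.dominated _ (hf.mapsTo hx)) (norm_nonneg _)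
            ((norm_nonneg _).trans (hf.dominated x hx))
      _ = _ := by ring

theorem iterate (h : DominatedSplitting f Λ Es Fs lam) (hfd : Differentiable ℝ f) (n : ℕ) :
    DominatedSplitting f^[n] Λ Es Fs (lam ^ n) := by
  induction n with
  | zero => exact h.id
  | succ n ih =>
    rw [iterate_succ, pow_succ]
    exact ih.comp h hfd (hfd.iterate n)

theorem leftInverse (h : DominatedSplitting f Λ Es Fs lam) (hΛ : SurjOn f Λ Λ)
    (hgf : LeftInverse g f) (hfd : Differentiable ℝ f) (hgd : Differentiable ℝ g) :
    DominatedSplitting g Λ Fs Es lam where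
  mapsTo y hy := by
    obtain ⟨x, hx, rfl⟩ := hΛ hy
    rwa [hgf x]
  linearIndependent x hx := LinearIndependent.pair_symm_iff.1 (h.linearIndependent x hx)
  invariant_fst := h.invariant_snd.leftInverse hΛ hgf hfd hgd
  invariant_snd := h.invariant_fst.leftInverse hΛ hgf hfd hgd
  dominated y hy := by
    obtain ⟨x, hx, rfl⟩ := hΛ hy
    obtain ⟨hE0, hE⟩ := h.invariant_fst.norm_fderiv_leftInverse h.mapsTo hgf hfd hgd hx
    obtain ⟨hF0, hF⟩ := h.invariant_snd.norm_fderiv_leftInverse h.mapsTo hgf hfd hgd hx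
    have hdom := h.dominated x hx
    rw [hE, hF, ← div_eq_mul_inv, le_div_iff₀ hE0, inv_mul_le_iff₀ hF0]
    linarith

theorem eq_zero_of_forall_one_le_critRatio [FiniteDimensional ℝ E] (hE : finrank ℝ E = 2)
    (h : DominatedSplitting f Λ Es Fs lam) (hfd : Differentiable ℝ f) (hlam0 : 0 ≤ lam)
    (hlam1 : lam < 1) {x : E} (hx : x ∈ Λ) {a b : ℝ}
    (hg : ∀ n, 1 ≤ critRatio f n x (a • Es x + b • Fs x)) : b = 0 := by
  obtain ⟨C, hC⟩ := (h.linearIndependent x hx).exists_sq_sub_le_of_one_le_abs_det_div hE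
  have hpow : Tendsto (lam ^ ·) atTop (𝓝 0) := tendsto_pow_atTop_nhds_zero_of_lt_one hlam0 hlam1
  by_contra hb
  have hsmall : ∀ᶠ n in atTop, lam ^ n * |a| ≤ |b| :=
    (hpow.mul_const |a|).eventually (ge_mem_nhds (by simpa using abs_pos.2 hb))
  have hbound : ∀ᶠ n in atTop, (|b| - lam ^ n * |a|) ^ 2 ≤ C * lam ^ n :=
    hsmall.mono fun n hn => hC _ ((h.iterate hfd n).dominated x hx) hn (hg n)
  have hlim := le_of_tendsto_of_tendsto ((tendsto_const_nhds.sub (hpow.mul_const |a|)).pow 2)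
    (hpow.const_mul C) hbound
  simp only [zero_mul, sub_zero, mul_zero, sq_abs] at hlim
  exact hb (pow_eq_zero_iff two_ne_zero |>.1 (le_antisymm hlim (sq_nonneg b)))

end DominatedSplitting

end Dynamics

theorem stmt16_general
    (f finv : EuclideanSpace ℝ (Fin 2) → EuclideanSpace ℝ (Fin 2))
    (hf : ContDiff ℝ 1 f) (hfinv : ContDiff ℝ 1 finv)
    (hinv : Function.LeftInverse finv f ∧ Function.RightInverse finv f)
    (Λ : Set (EuclideanSpace ℝ (Fin 2))) (hΛi : f '' Λ = Λ)
    (Es Fs : EuclideanSpace ℝ (Fin 2) → EuclideanSpace ℝ (Fin 2))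
    (hEunit : ∀ x ∈ Λ, ‖Es x‖ = 1) (hFunit : ∀ x ∈ Λ, ‖Fs x‖ = 1)
    (hindep : ∀ x ∈ Λ, LinearIndependent ℝ ![Es x, Fs x])
    (hEinv : ∀ x ∈ Λ, ∃ α : ℝ, fderiv ℝ f x (Es x) = α • Es (f x))
    (hFinv : ∀ x ∈ Λ, ∃ β : ℝ, fderiv ℝ f x (Fs x) = β • Fs (f x))
    (lam : ℝ) (hlam0 : 0 < lam) (hlam1 : lam < 1)
    (hdom : ∀ x ∈ Λ, ‖fderiv ℝ f x (Es x)‖ < lam * ‖fderiv ℝ f x (Fs x)‖) :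
    ∀ x ∈ Λ, ¬ ∃ v : EuclideanSpace ℝ (Fin 2), ‖v‖ = 1 ∧
      (∀ n : ℕ, 1 ≤ |LinearMap.det (fderiv ℝ (f^[n]) x).toLinearMap| /
        ‖fderiv ℝ (f^[n]) x v‖ ^ 2) ∧
      (∀ n : ℕ, 1 ≤ |LinearMap.det (fderiv ℝ (finv^[n]) x).toLinearMap| /
        ‖fderiv ℝ (finv^[n]) x v‖ ^ 2) := by
  rintro x hx ⟨v, hv, hfwd, hbwd⟩
  have hfd := hf.differentiable one_ne_zero
  have hgd := hfinv.differentiable one_ne_zero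
  have hsplit : DominatedSplitting f Λ Es Fs lam :=
    { mapsTo := mapsTo_iff_image_subset.2 hΛi.le
      linearIndependent := hindep
      invariant_fst := fun y hy => ⟨hEunit y hy, hEinv y hy⟩
      invariant_snd := fun y hy => ⟨hFunit y hy, hFinv y hy⟩
      dominated := fun y hy => (hdom y hy).le }
  have hsplit_inv := hsplit.leftInverse hΛi.ge hinv.1 hfd hgd
  have hE : finrank ℝ (EuclideanSpace ℝ (Fin 2)) = 2 := finrank_euclideanSpace_fin
  obtain ⟨a, b, rfl⟩ := (hindep x hx).exists_smul_add_smul_eq hE v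
  have hb := hsplit.eq_zero_of_forall_one_le_critRatio hE hfd hlam0.le hlam1 hx hfwd
  have ha := hsplit_inv.eq_zero_of_forall_one_le_critRatio hE hgd hlam0.le hlam1 hx (a := b)
    fun n => by rw [add_comm]; exact hbwd n
  simp [ha, hb] at hv

/-- A dominated splitting has no critical points: if a compact invariant set `Λ` of a
surface diffeomorphism carries a dominated splitting `TM|_Λ = E ⊕ F` into line fields
(spanned by unit vector fields `Es`, `Fs`, invariant under `Df`, with uniform domination
constant `lam < 1`), then no point of `Λ` admits a unit direction `v` with
`g^n(v) = |det D f^n| / ‖D f^n v‖² ≥ 1` for all `n ∈ ℤ`. -/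
theorem stmt16
    (f finv : EuclideanSpace ℝ (Fin 2) → EuclideanSpace ℝ (Fin 2))
    (hf : ContDiff ℝ 1 f) (hfinv : ContDiff ℝ 1 finv)
    (hinv : Function.LeftInverse finv f ∧ Function.RightInverse finv f)
    (Λ : Set (EuclideanSpace ℝ (Fin 2))) (hΛc : IsCompact Λ) (hΛi : f '' Λ = Λ)
    (Es Fs : EuclideanSpace ℝ (Fin 2) → EuclideanSpace ℝ (Fin 2))
    (hEunit : ∀ x ∈ Λ, ‖Es x‖ = 1) (hFunit : ∀ x ∈ Λ, ‖Fs x‖ = 1)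
    (hindep : ∀ x ∈ Λ, LinearIndependent ℝ ![Es x, Fs x])
    (hEinv : ∀ x ∈ Λ, ∃ α : ℝ, fderiv ℝ f x (Es x) = α • Es (f x))
    (hFinv : ∀ x ∈ Λ, ∃ β : ℝ, fderiv ℝ f x (Fs x) = β • Fs (f x))
    (lam : ℝ) (hlam0 : 0 < lam) (hlam1 : lam < 1)
    (hdom : ∀ x ∈ Λ, ‖fderiv ℝ f x (Es x)‖ < lam * ‖fderiv ℝ f x (Fs x)‖) :
    ∀ x ∈ Λ, ¬ ∃ v : EuclideanSpace ℝ (Fin 2), ‖v‖ = 1 ∧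
      (∀ n : ℕ, 1 ≤ |LinearMap.det (fderiv ℝ (f^[n]) x).toLinearMap| /
        ‖fderiv ℝ (f^[n]) x v‖ ^ 2) ∧
      (∀ n : ℕ, 1 ≤ |LinearMap.det (fderiv ℝ (finv^[n]) x).toLinearMap| /
        ‖fderiv ℝ (finv^[n]) x v‖ ^ 2) :=
  stmt16_general f finv hf hfinv hinv Λ hΛi Es Fs hEunit hFunit hindep hEinv hFinv lam hlam0 hlam1
    hdom
end
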